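/- For integers k ≥ 2 and n ≥ 2k, if F is a family of stable k-subsets of {1,...,n} such that every element of {1,...,n} lies in at most half the members of F, and |F| > k²·C(n-k-2, k-2), then F contains two disjoint sets. -/

import Mathlib

/-!
Suppose `F` is intersecting and fix `A₀ ∈ F`. As no element lies in more than half of the
members of `F`, every `j ∈ A₀` is avoided by some `B j ∈ F`. Each `C ∈ F` meets `A₀` in some `j`
and `B j` in some `i ≠ j`, so `F` is covered by the `k²` families of stable `k`-sets through a
pair `{i, j}`. Deleting `i`, `j` and three of their cyclic neighbours turns such sets into stable
`(k - 2)`-subsets of a path on `n - 5` vertices, of which there are at most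
`C(n - k - 2, k - 2)`.
-/

open Finset

attribute [local instance] Classical.propDecidable

/-- `A` is a stable subset of `{1,...,n}`: no two cyclically consecutive elements. -/
def Stable (n : ℕ) (A : Finset ℕ) : Prop :=
  (∀ i ∈ A, i + 1 ∉ A) ∧ ¬(1 ∈ A ∧ n ∈ A)

/-- The collection of stable `k`-subsets of `{1,...,n}`. -/
noncomputable def stableSets (n k : ℕ) : Finset (Finset ℕ) :=
  ((Finset.Icc 1 n).powersetCard k).filter (fun A => Stable n A)

lemma mem_stableSets {n k : ℕ} {A : Finset ℕ} :
    A ∈ stableSets n k ↔ (A ⊆ Icc 1 n ∧ #A = k) ∧ Stable n A := by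
  rw [stableSets, mem_filter, mem_powersetCard]

lemma Stable.ne_succ {n a b : ℕ} {A : Finset ℕ} (hst : Stable n A) (ha : a ∈ A) (hb : b ∈ A) :
    b ≠ a + 1 :=
  fun h => hst.1 a ha (h ▸ hb)

lemma Stable.ne_of_eq_one {n a b : ℕ} {A : Finset ℕ} (hst : Stable n A) (ha : a ∈ A)
    (hb : b ∈ A) (ha1 : a = 1) : b ≠ n := by
  rintro rfl; exact hst.2 ⟨ha1 ▸ ha, hb⟩

noncomputable def pathStableSets (N m : ℕ) : Finset (Finset ℕ) :=
  ((Icc 1 N).powersetCard m).filter fun T => ∀ x ∈ T, x + 1 ∉ T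

lemma mem_pathStableSets {N m : ℕ} {T : Finset ℕ} :
    T ∈ pathStableSets N m ↔ (T ⊆ Icc 1 N ∧ #T = m) ∧ ∀ x ∈ T, x + 1 ∉ T := by
  rw [pathStableSets, mem_filter, mem_powersetCard]

lemma filter_notMem_pathStableSets_subset (N m : ℕ) :
    {T ∈ pathStableSets (N + 1) m | N + 1 ∉ T} ⊆ pathStableSets N m := by
  intro T hT
  obtain ⟨⟨⟨hsub, hcard⟩, hgap⟩, hN⟩ := mem_filter.1 hT |>.imp_left mem_pathStableSets.1
  refine mem_pathStableSets.2 ⟨⟨fun x hx => ?_, hcard⟩, hgap⟩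
  have := mem_Icc.1 (hsub hx)
  have : x ≠ N + 1 := by rintro rfl; exact hN hx
  exact mem_Icc.2 (by omega)

lemma card_filter_mem_pathStableSets_le (N m : ℕ) :
    #{T ∈ pathStableSets (N + 2) (m + 1) | N + 2 ∈ T} ≤ #(pathStableSets N m) := by
  refine card_le_card_of_injOn (·.erase (N + 2)) (fun T hT => ?_)
    ((erase_injOn' (N + 2)).mono fun T hT => (mem_filter.1 hT).2)
  obtain ⟨⟨⟨hsub, hcard⟩, hgap⟩, hN⟩ := mem_filter.1 hT |>.imp_left mem_pathStableSets.1
  refine mem_pathStableSets.2 ⟨⟨fun x hx => ?_, by rw [card_erase_of_mem hN, hcard]; rfl⟩,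
    fun x hx hx' => hgap x (mem_of_mem_erase hx) (mem_of_mem_erase hx')⟩
  obtain ⟨hxN, hx⟩ := mem_erase.1 hx
  have := mem_Icc.1 (hsub hx)
  have : x ≠ N + 1 := by rintro rfl; exact hgap _ hx hN
  exact mem_Icc.2 (by omega)

lemma card_pathStableSets_le_choose (N m : ℕ) : #(pathStableSets N m) ≤ N.choose m := by
  calc #(pathStableSets N m) ≤ #((Icc 1 N).powersetCard m) := card_filter_le _ _
    _ = N.choose m := by simp

lemma choose_add_choose_sub (a m : ℕ) :
    (a - m).choose m + (a - m).choose (m + 1) = (a + 1 - m).choose (m + 1) := by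
  rcases le_or_gt m a with h | h
  · rw [show a + 1 - m = a - m + 1 by omega, Nat.choose_succ_succ]
  · obtain ⟨m, rfl⟩ : ∃ m', m = m' + 1 := ⟨m - 1, by omega⟩
    simp [show a - (m + 1) = 0 by omega, show a + 1 - (m + 1) = 0 by omega]

lemma card_pathStableSets_le (N m : ℕ) : #(pathStableSets N m) ≤ (N + 1 - m).choose m := by
  induction N using Nat.twoStepInduction generalizing m with
  | zero => exact (card_pathStableSets_le_choose 0 m).trans (by rcases m with _ | m <;> simp)
  | one =>
    exact (card_pathStableSets_le_choose 1 m).trans <| by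
      rcases m with _ | _ | m <;> simp [Nat.choose_eq_zero_of_lt]
  | more N ih₀ ih₁ =>
    rcases m with _ | m
    · simpa using card_pathStableSets_le_choose (N + 2) 0
    calc #(pathStableSets (N + 2) (m + 1))
        = #{T ∈ pathStableSets (N + 2) (m + 1) | N + 2 ∈ T}
          + #{T ∈ pathStableSets (N + 2) (m + 1) | N + 2 ∉ T} :=
          (card_filter_add_card_filter_not _).symm
      _ ≤ #(pathStableSets N m) + #(pathStableSets (N + 1) (m + 1)) :=
          add_le_add (card_filter_mem_pathStableSets_le N m)
            (card_le_card (filter_notMem_pathStableSets_subset (N + 1) (m + 1)))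
      _ ≤ (N + 1 - m).choose m + (N + 1 - m).choose (m + 1) :=
          add_le_add (ih₀ m) (by simpa using ih₁ (m + 1))
      _ = (N + 2 + 1 - (m + 1)).choose (m + 1) := by
          rw [choose_add_choose_sub]; congr 1; omega

section CycleToPath

/-- Numbers `1, …, n - 5` the path left from the cycle `1, …, n` by deleting
`i - 1, i, i + 1, j, j + 1`, starting from `i + 2`. The vertex `j - 1`, which a stable set
through `j` avoids, separates the two arcs between `i` and `j`. -/
def cycleToPath (n i j x : ℕ) : ℕ :=
  if x < i then x + n - i - 3 else if x < j then x - i - 1 else x - i - 3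

def pathToCycle (n i j y : ℕ) : ℕ :=
  if y + 2 < j - i then y + i + 1 else if y + 3 ≤ n - i then y + i + 3 else y + i + 3 - n

variable {n i j : ℕ} {A : Finset ℕ}

lemma cycleToPath_mem_Icc (hA : A ⊆ Icc 1 n) (hst : Stable n A) (hi : i ∈ A) (hj : j ∈ A)
    (hij : i < j) {x : ℕ} (hx : x ∈ A \ {i, j}) :
    cycleToPath n i j x ∈ Icc 1 (n - 5) ∧ pathToCycle n i j (cycleToPath n i j x) = x := by
  simp only [mem_sdiff, mem_insert, mem_singleton, not_or] at hx
  obtain ⟨hx, hxi, hxj⟩ := hx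
  have := mem_Icc.1 (hA hx); have := mem_Icc.1 (hA hi); have := mem_Icc.1 (hA hj)
  have := hst.ne_succ hi hj; have := hst.ne_succ hx hi; have := hst.ne_succ hx hj
  have := hst.ne_succ hi hx; have := hst.ne_succ hj hx
  have := hst.ne_of_eq_one hx hj; have := hst.ne_of_eq_one hi hx; have := hst.ne_of_eq_one hi hj
  simp only [cycleToPath, pathToCycle, mem_Icc]
  split_ifs <;> omega

lemma cycleToPath_ne_succ (hA : A ⊆ Icc 1 n) (hst : Stable n A) (hi : i ∈ A) (hj : j ∈ A)
    (hij : i < j) {x y : ℕ} (hx : x ∈ A \ {i, j}) (hy : y ∈ A \ {i, j}) :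
    cycleToPath n i j y ≠ cycleToPath n i j x + 1 := by
  simp only [mem_sdiff, mem_insert, mem_singleton, not_or] at hx hy
  obtain ⟨hx, hxi, hxj⟩ := hx
  obtain ⟨hy, hyi, hyj⟩ := hy
  have := mem_Icc.1 (hA hx); have := mem_Icc.1 (hA hy); have := mem_Icc.1 (hA hi)
  have := mem_Icc.1 (hA hj)
  have := hst.ne_succ hx hy; have := hst.ne_succ hi hj; have := hst.ne_succ hx hj
  have := hst.ne_succ hj hx; have := hst.ne_succ hy hj; have := hst.ne_succ hj hy
  have := hst.ne_of_eq_one hy hx; have := hst.ne_of_eq_one hy hj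
  simp only [cycleToPath]
  split_ifs <;> omega

lemma image_cycleToPath_mem_pathStableSets {k : ℕ} (hA : A ∈ stableSets n k) (hi : i ∈ A)
    (hj : j ∈ A) (hij : i < j) :
    (A \ {i, j}).image (cycleToPath n i j) ∈ pathStableSets (n - 5) (k - 2) := by
  obtain ⟨⟨hsub, hcard⟩, hst⟩ := mem_stableSets.1 hA
  have hinj : Set.InjOn (cycleToPath n i j) ↑(A \ {i, j}) :=
    Set.LeftInvOn.injOn (f₁' := pathToCycle n i j) fun x hx =>
      (cycleToPath_mem_Icc hsub hst hi hj hij hx).2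
  refine mem_pathStableSets.2 ⟨⟨?_, ?_⟩, ?_⟩
  · simp only [image_subset_iff]
    exact fun x hx => (cycleToPath_mem_Icc hsub hst hi hj hij hx).1
  · rw [card_image_of_injOn hinj,
      card_sdiff_of_subset (insert_subset hi (singleton_subset_iff.2 hj)), card_pair hij.ne, hcard]
  · simp only [mem_image]
    rintro _ ⟨x, hx, rfl⟩ ⟨y, hy, hxy⟩
    exact cycleToPath_ne_succ hsub hst hi hj hij hx hy hxy

lemma pathToCycle_image_cycleToPath {k : ℕ} (hA : A ∈ stableSets n k) (hi : i ∈ A)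
    (hj : j ∈ A) (hij : i < j) :
    insert i (insert j (((A \ {i, j}).image (cycleToPath n i j)).image (pathToCycle n i j)))
      = A := by
  obtain ⟨⟨hsub, -⟩, hst⟩ := mem_stableSets.1 hA
  rw [image_image, image_congr (f := pathToCycle n i j ∘ cycleToPath n i j) (g := id)
    fun x hx => (cycleToPath_mem_Icc hsub hst hi hj hij hx).2, image_id]
  ext x
  grind

end CycleToPath

lemma card_filter_stableSets_pair_le {n k i j : ℕ} (hk : 2 ≤ k) (hij : i < j) :
    #{A ∈ stableSets n k | i ∈ A ∧ j ∈ A} ≤ (n - k - 2).choose (k - 2) := by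
  calc #{A ∈ stableSets n k | i ∈ A ∧ j ∈ A} ≤ #(pathStableSets (n - 5) (k - 2)) := by
        refine card_le_card_of_injOn (fun A => (A \ {i, j}).image (cycleToPath n i j))
          (fun A hA => ?_) ?_
        · obtain ⟨hA, hi, hj⟩ := mem_filter.1 hA
          exact image_cycleToPath_mem_pathStableSets hA hi hj hij
        · refine Set.LeftInvOn.injOn
            (f₁' := fun T => insert i (insert j (T.image (pathToCycle n i j)))) fun A hA => ?_
          obtain ⟨hA, hi, hj⟩ := mem_filter.1 hA
          exact pathToCycle_image_cycleToPath hA hi hj hij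
    _ ≤ (n - 5 + 1 - (k - 2)).choose (k - 2) := card_pathStableSets_le _ _
    _ = (n - k - 2).choose (k - 2) := by
        obtain rfl | hk := hk.eq_or_lt
        · simp
        · congr 1; omega

lemma exists_notMem_of_two_mul_card_filter_le {α : Type*} [DecidableEq α]
    {F : Finset (Finset α)} (hF : F.Nonempty) {j : α} (h : 2 * #{A ∈ F | j ∈ A} ≤ #F) :
    ∃ B ∈ F, j ∉ B := by
  by_contra! hall
  rw [filter_true_of_mem hall] at h
  have := hF.card_pos
  omega

lemma card_le_of_intersecting {α : Type*} [DecidableEq α] {F : Finset (Finset α)} {k M : ℕ}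
    (hcard : ∀ A ∈ F, #A = k) (hF : (F : Set (Finset α)).Intersecting)
    (havoid : ∀ A ∈ F, ∀ j ∈ A, ∃ B ∈ F, j ∉ B)
    (hpair : ∀ i j, i ≠ j → #{C ∈ F | i ∈ C ∧ j ∈ C} ≤ M) : #F ≤ k ^ 2 * M := by
  obtain rfl | ⟨A₀, hA₀⟩ := F.eq_empty_or_nonempty
  · simp
  choose! B hBF hBj using havoid A₀ hA₀
  have hcover : F ⊆ A₀.biUnion fun j => (B j).biUnion fun i => {C ∈ F | i ∈ C ∧ j ∈ C} := by
    intro C hC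
    obtain ⟨j, hjC, hjA₀⟩ := not_disjoint_iff.1 (hF hC hA₀)
    obtain ⟨i, hiC, hiB⟩ := not_disjoint_iff.1 (hF hC (hBF j hjA₀))
    simp only [mem_biUnion, mem_filter]
    exact ⟨j, hjA₀, i, hiB, hC, hiC, hjC⟩
  calc #F ≤ #A₀ * (k * M) := (card_le_card hcover).trans <|
        card_biUnion_le_card_mul _ _ _ fun j hj => by
          rw [← hcard _ (hBF j hj)]
          exact card_biUnion_le_card_mul _ _ _ fun i hi =>
            hpair i j (ne_of_mem_of_not_mem hi (hBj j hj))
    _ = k ^ 2 * M := by rw [hcard _ hA₀]; ring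

theorem stmt_19_general (n k : ℕ) (hk : 2 ≤ k) (F : Finset (Finset ℕ))
    (hF : F ⊆ stableSets n k)
    (hpop : ∀ j ∈ Finset.Icc 1 n, 2 * (F.filter (fun A => j ∈ A)).card ≤ F.card)
    (hsize : k ^ 2 * Nat.choose (n - k - 2) (k - 2) < F.card) :
    ∃ A ∈ F, ∃ B ∈ F, A ≠ B ∧ Disjoint A B := by
  by_contra! hdisj
  have hmem : ∀ A ∈ F, (A ⊆ Icc 1 n ∧ #A = k) ∧ Stable n A := fun A hA =>
    mem_stableSets.1 (hF hA)
  have hinter : (F : Set (Finset ℕ)).Intersecting := by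
    intro A hA B hB
    obtain rfl | hAB := eq_or_ne A B
    · rw [disjoint_self, bot_eq_empty, ← card_eq_zero, (hmem A hA).1.2]
      omega
    · exact hdisj A hA B hB hAB
  have hpair : ∀ i j, i ≠ j → #{C ∈ F | i ∈ C ∧ j ∈ C} ≤ (n - k - 2).choose (k - 2) := by
    intro i j hij
    rcases hij.lt_or_gt with h | h
    · exact (card_le_card (filter_subset_filter _ hF)).trans (card_filter_stableSets_pair_le hk h)
    · simpa only [and_comm] using
        (card_le_card (filter_subset_filter _ hF)).trans (card_filter_stableSets_pair_le hk h)
  have havoid : ∀ A ∈ F, ∀ j ∈ A, ∃ B ∈ F, j ∉ B := fun A hA j hj =>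
    exists_notMem_of_two_mul_card_filter_le ⟨A, hA⟩ (hpop j ((hmem A hA).1.1 hj))
  have := card_le_of_intersecting (fun A hA => (hmem A hA).1.2) hinter havoid hpair
  omega

theorem stmt_19 (n k : ℕ) (hk : 2 ≤ k) (hn : 2 * k ≤ n) (F : Finset (Finset ℕ))
    (hF : F ⊆ stableSets n k)
    (hpop : ∀ j ∈ Finset.Icc 1 n, 2 * (F.filter (fun A => j ∈ A)).card ≤ F.card)
    (hsize : k ^ 2 * Nat.choose (n - k - 2) (k - 2) < F.card) :
    ∃ A ∈ F, ∃ B ∈ F, A ≠ B ∧ Disjoint A B :=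
  stmt_19_general n k hk F hF hpop hsize
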